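/- arXiv:1805.03297 — 2 statements merged into one kernel-verified Lean document; each statement's English description precedes it below -/
import Mathlib

section
/- For the preprojective algebra A = Π_Q(k) of type Ã_{n−1} and each vertex e_ℓ, the degree-j graded piece of e_ℓA has dimension dim_k((e_ℓA)_j) = j + 1 for every j ≥ 0; hence the Hilbert series H_{e_ℓA}(t) = Σ_j dim_k((e_ℓA)_j) t^j equals 1/(1−t)^2, and H_A(t) = n/(1−t)^2. -/
open CategoryTheory TensorProduct PowerSeries Matrix

noncomputable section

/-! ### The preprojective algebra of type Ã_{n-1}, via its presentation -/

/-- The defining relations of the preprojective algebra of the extended Dynkin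
quiver `Ã_{n-1}` among the vertex idempotents `e i`, the arrows `a i : e i → e (i+1)`
and the reversed arrows `s i : e (i+1) → e i` (indices mod `n`); the relation ideal of
the preprojective algebra is generated by `a i * s i = s (i-1) * a (i-1)`. -/
def PreprojectiveRelations (n : ℕ) [NeZero n] {C : Type} [Ring C]
    (e a s : ZMod n → C) : Prop :=
  (∀ i j, e i * e j = if i = j then e i else 0) ∧
  (∑ i, e i = 1) ∧
  (∀ i, e i * a i = a i) ∧ (∀ i, a i * e (i + 1) = a i) ∧
  (∀ i, e (i + 1) * s i = s i) ∧ (∀ i, s i * e i = s i) ∧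
  (∀ i, a i * s i = s (i - 1) * a (i - 1))

/-- `A`, equipped with its grading `𝒜` and elements `e, a, s`, is the preprojective
algebra `Π_Q(k)` of the extended Dynkin quiver `Q = Ã_{n-1}`: the preprojective
relations hold, the vertices have degree `0` and the arrows degree `1`, `A` is
generated as a `k`-algebra by vertices and arrows, and `A` is universal (initial)
among `k`-algebras with elements satisfying the preprojective relations.  Together
with generation, universality exhibits `A` as the path algebra `kQ̄` of the double
quiver modulo the ideal generated by the preprojective relations. -/
def IsPreprojectiveAlgebraAn (k : Type) [Field k] (n : ℕ) [NeZero n]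
    (A : Type) [Ring A] [Algebra k A] (𝒜 : ℕ → Submodule k A)
    (e a s : ZMod n → A) : Prop :=
  PreprojectiveRelations n e a s ∧
  (∀ i, e i ∈ 𝒜 0) ∧ (∀ i, a i ∈ 𝒜 1) ∧ (∀ i, s i ∈ 𝒜 1) ∧
  (Algebra.adjoin k (Set.range e ∪ Set.range a ∪ Set.range s) = ⊤) ∧
  (∀ (C : Type) [Ring C] [Algebra k C] (e' a' s' : ZMod n → C),
      PreprojectiveRelations n e' a' s' →
      ∃ f : A →ₐ[k] C, (∀ i, f (e i) = e' i) ∧ (∀ i, f (a i) = a' i) ∧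
        (∀ i, f (s i) = s' i))

variable (k : Type) [Field k] [IsAlgClosed k] [CharZero k]
variable (n : ℕ) [NeZero n]
variable (A : Type) [Ring A] [Algebra k A] (𝒜 : ℕ → Submodule k A) [GradedAlgebra 𝒜]
variable (e a astar : ZMod n → A)

/-!
Every element of `e_ℓ A` is a combination of the paths `a^p s^q` starting at `e_ℓ`: left
multiplication by a vertex or an arrow sends such a path to another one or to `0`, the one
nontrivial case, moving `s` past the `a`'s, being exactly the preprojective relation. These paths
are linearly independent because the universal property yields the representation
`e_i ↦ E_ii`, `a_i ↦ x E_{i,i+1}`, `s_i ↦ y E_{i+1,i}` of `A` on `k[x,y]^n`, which sends the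
path `a^p s^q` from `e_ℓ` to `x^p y^q E_{ℓ,ℓ+p-q}`. So the `j + 1` paths with `p + q = j` form a
basis of `(e_ℓ A)_j`, and `∑ (j + 1) t^j = 1/(1-t)^2`.
-/

theorem Submodule.eq_top_of_one_mem_of_mul_mem {R A : Type*} [CommSemiring R] [Semiring A]
    [Algebra R A] {G : Set A} (hG : Algebra.adjoin R G = ⊤) {S : Submodule R A} (h1 : 1 ∈ S)
    (hS : ∀ g ∈ G, ∀ y ∈ S, g * y ∈ S) : S = ⊤ := by
  have hmul : ∀ x ∈ Algebra.adjoin R G, ∀ y ∈ S, x * y ∈ S := by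
    intro x hx
    induction hx using Algebra.adjoin_induction with
    | mem g hg => exact hS g hg
    | algebraMap c =>
      intro y hy
      rw [Algebra.algebraMap_eq_smul_one, smul_mul_assoc, one_mul]
      exact S.smul_mem c hy
    | add x z _ _ hx hz =>
      intro y hy
      rw [add_mul]
      exact S.add_mem (hx y hy) (hz y hy)
    | mul x z _ _ hx hz =>
      intro y hy
      rw [mul_assoc]
      exact hx _ (hz y hy)
  exact eq_top_iff.2 fun x _ => mul_one x ▸ hmul x (hG ▸ Algebra.mem_top) 1 h1

theorem DirectSum.Decomposition.eq_span_image_of_span_eq_top {R M ι ι' : Type*} [Semiring R]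
    [AddCommMonoid M] [Module R M] [DecidableEq ι] (ℳ : ι → Submodule R M)
    [DirectSum.Decomposition ℳ] {b : ι' → M} {deg : ι' → ι} (hb : ∀ i, b i ∈ ℳ (deg i))
    (hspan : Submodule.span R (Set.range b) = ⊤) (j : ι) :
    ℳ j = Submodule.span R (b '' (deg ⁻¹' {j})) := by
  refine le_antisymm (fun x hx => ?_) (Submodule.span_le.2 ?_)
  · have hproj : ∀ y ∈ Submodule.span R (Set.range b),
        (DirectSum.decompose ℳ y j : M) ∈ Submodule.span R (b '' (deg ⁻¹' {j})) := by
      intro y hy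
      induction hy using Submodule.span_induction with
      | mem y hy =>
        obtain ⟨i, rfl⟩ := hy
        by_cases hi : deg i = j
        · rw [DirectSum.decompose_of_mem_same ℳ (hi ▸ hb i)]
          exact Submodule.subset_span ⟨i, hi, rfl⟩
        · rw [DirectSum.decompose_of_mem_ne ℳ (hb i) hi]
          exact Submodule.zero_mem _
      | zero => simp
      | add y z _ _ hy hz =>
        rw [DirectSum.decompose_add, DirectSum.add_apply, Submodule.coe_add]
        exact Submodule.add_mem _ hy hz
      | smul c y _ hy =>
        rw [DirectSum.decompose_smul, DirectSum.smul_apply, Submodule.coe_smul]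
        exact Submodule.smul_mem _ c hy
    simpa [DirectSum.decompose_of_mem_same ℳ hx] using hproj x (hspan ▸ Submodule.mem_top)
  · rintro _ ⟨i, hi, rfl⟩
    exact (Set.mem_singleton_iff.1 hi) ▸ hb i

theorem finrank_span_image_finset {R M ι : Type*} [Ring R] [Nontrivial R] [StrongRankCondition R]
    [AddCommGroup M] [Module R M] {b : ι → M} (hb : LinearIndependent R b) (s : Finset ι) :
    Module.finrank R (Submodule.span R (b '' s)) = s.card := by
  rw [Set.image_eq_range]
  exact (finrank_span_eq_card (hb.comp _ Subtype.val_injective)).trans (Fintype.card_coe s)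

theorem PowerSeries.mk_succ_mul_one_sub_sq (R : Type*) [CommRing R] :
    (mk fun j => ((j + 1 : ℕ) : R)) * (1 - X) ^ 2 = 1 := by
  have hsq : (mk fun j => ((j + 1 : ℕ) : R)) = mk 1 ^ 2 := by
    rw [mk_one_pow_eq_mk_choose_add]
    simp [add_comm]
  rw [hsq, ← mul_pow, mk_one_mul_one_sub_eq_one, one_pow]

namespace PreprojectiveAn

variable {k : Type} [Field k] {n : ℕ} {A : Type} [Ring A] [Algebra k A]

/-- The path from `e ℓ` along `p` arrows `a` and then `q` reversed arrows `s`. -/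
def pathMonomial (e a s : ZMod n → A) (ℓ : ZMod n) : ℕ → ℕ → A
  | 0, 0 => e ℓ
  | p + 1, q => a ℓ * pathMonomial e a s (ℓ + 1) p q
  | 0, q + 1 => s (ℓ - 1) * pathMonomial e a s (ℓ - 1) 0 q

theorem pathMonomial_mem (𝒜 : ℕ → Submodule k A) [GradedAlgebra 𝒜] {e a s : ZMod n → A}
    (he : ∀ i, e i ∈ 𝒜 0) (ha : ∀ i, a i ∈ 𝒜 1) (hs : ∀ i, s i ∈ 𝒜 1) (ℓ : ZMod n) (p q : ℕ) :
    pathMonomial e a s ℓ p q ∈ 𝒜 (p + q) := by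
  fun_induction pathMonomial e a s ℓ p q with
  | case1 ℓ => exact he ℓ
  | case2 ℓ p q ih =>
    convert SetLike.mul_mem_graded (ha ℓ) ih using 2
    omega
  | case3 ℓ q ih =>
    convert SetLike.mul_mem_graded (hs (ℓ - 1)) ih using 2
    omega

section Relations

variable [NeZero n] {e a s : ZMod n → A} (hR : PreprojectiveRelations n e a s)
include hR

theorem reverse_mul_pathMonomial_sub_one (ℓ : ZMod n) (p q : ℕ) :
    s (ℓ - 1) * pathMonomial e a s (ℓ - 1) p q = pathMonomial e a s ℓ p (q + 1) := by
  induction p generalizing ℓ q with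
  | zero => rw [pathMonomial]
  | succ p ih =>
    have hrel := hR.2.2.2.2.2.2 ℓ
    rw [pathMonomial, pathMonomial, sub_add_cancel, ← mul_assoc, ← hrel, mul_assoc, ← ih,
      add_sub_cancel_right]

theorem vertex_mul_pathMonomial_self (ℓ : ZMod n) (p q : ℕ) :
    e ℓ * pathMonomial e a s ℓ p q = pathMonomial e a s ℓ p q := by
  cases p with
  | succ p => rw [pathMonomial, ← mul_assoc, hR.2.2.1]
  | zero =>
    cases q with
    | zero => rw [pathMonomial, hR.1, if_pos rfl]
    | succ q =>
      have hs := hR.2.2.2.2.1 (ℓ - 1)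
      rw [sub_add_cancel] at hs
      rw [pathMonomial, ← mul_assoc, hs]

theorem vertex_mul_pathMonomial (i ℓ : ZMod n) (p q : ℕ) :
    e i * pathMonomial e a s ℓ p q = if i = ℓ then pathMonomial e a s ℓ p q else 0 := by
  split_ifs with h
  · rw [h, vertex_mul_pathMonomial_self hR]
  · rw [← vertex_mul_pathMonomial_self hR, ← mul_assoc, hR.1, if_neg h, zero_mul]

theorem arrow_mul_pathMonomial (i ℓ : ZMod n) (p q : ℕ) :
    a i * pathMonomial e a s ℓ p q =
      if i + 1 = ℓ then pathMonomial e a s i (p + 1) q else 0 := by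
  rw [← hR.2.2.2.1 i, mul_assoc, vertex_mul_pathMonomial hR]
  split_ifs with h
  · rw [← h, pathMonomial]
  · rw [mul_zero]

theorem reverse_mul_pathMonomial (i ℓ : ZMod n) (p q : ℕ) :
    s i * pathMonomial e a s ℓ p q =
      if i = ℓ then pathMonomial e a s (i + 1) p (q + 1) else 0 := by
  rw [← hR.2.2.2.2.2.1 i, mul_assoc, vertex_mul_pathMonomial hR]
  split_ifs with h
  · rw [← h, ← reverse_mul_pathMonomial_sub_one hR, add_sub_cancel_right]
  · rw [mul_zero]

theorem span_pathMonomial_eq_top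
    (hgen : Algebra.adjoin k (Set.range e ∪ Set.range a ∪ Set.range s) = ⊤) :
    Submodule.span k (Set.range fun i : ZMod n × ℕ × ℕ => pathMonomial e a s i.1 i.2.1 i.2.2) =
      ⊤ := by
  set S := Submodule.span k
    (Set.range fun i : ZMod n × ℕ × ℕ => pathMonomial e a s i.1 i.2.1 i.2.2)
  have hmon (ℓ : ZMod n) (p q : ℕ) : pathMonomial e a s ℓ p q ∈ S :=
    Submodule.subset_span ⟨(ℓ, p, q), rfl⟩
  refine Submodule.eq_top_of_one_mem_of_mul_mem hgen ?_ fun g hg => ?_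
  · rw [← hR.2.1]
    exact Submodule.sum_mem _ fun ℓ _ => pathMonomial.eq_1 e a s ℓ ▸ hmon ℓ 0 0
  · suffices hgS : S ≤ S.comap (LinearMap.mulLeft k g) from fun y hy => hgS hy
    refine Submodule.span_le.2 ?_
    rintro _ ⟨⟨ℓ, p, q⟩, rfl⟩
    change g * pathMonomial e a s ℓ p q ∈ S
    rcases hg with (⟨i, rfl⟩ | ⟨i, rfl⟩) | ⟨i, rfl⟩ <;>
      simp only [vertex_mul_pathMonomial hR, arrow_mul_pathMonomial hR,
        reverse_mul_pathMonomial hR] <;>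
      split_ifs <;> simp [hmon]

end Relations

section Model

variable (k n) [NeZero n]

abbrev Model : Type := Matrix (ZMod n) (ZMod n) (MvPolynomial (Fin 2) k)

def modelVertex (i : ZMod n) : Model k n := Matrix.single i i 1

def modelArrow (i : ZMod n) : Model k n := Matrix.single i (i + 1) (MvPolynomial.X 0)

def modelReverse (i : ZMod n) : Model k n := Matrix.single (i + 1) i (MvPolynomial.X 1)

theorem preprojectiveRelations_model :
    PreprojectiveRelations n (modelVertex k n) (modelArrow k n) (modelReverse k n) := by
  refine ⟨fun i j => ?_, ?_, fun i => ?_, fun i => ?_, fun i => ?_, fun i => ?_, fun i => ?_⟩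
  · split_ifs with h
    · rw [h, modelVertex, Matrix.single_mul_single_same, one_mul]
    · rw [modelVertex, modelVertex, Matrix.single_mul_single_of_ne (h := h)]
  · refine Matrix.ext fun i j => ?_
    rw [Matrix.sum_apply]
    simp [modelVertex, Matrix.single_apply, Matrix.one_apply, ite_and]
  all_goals simp only [modelVertex, modelArrow, modelReverse, Matrix.single_mul_single_same,
    mul_one, sub_add_cancel, mul_comm]

variable {k n}

theorem model_image_pathMonomial {e a s : ZMod n → A} (f : A →ₐ[k] Model k n)
    (hfe : ∀ i, f (e i) = modelVertex k n i) (hfa : ∀ i, f (a i) = modelArrow k n i)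
    (hfs : ∀ i, f (s i) = modelReverse k n i) (ℓ : ZMod n) (p q : ℕ) :
    f (pathMonomial e a s ℓ p q) = Matrix.single ℓ (ℓ + p - q)
      (MvPolynomial.monomial (Finsupp.single 0 p + Finsupp.single 1 q) 1) := by
  fun_induction pathMonomial e a s ℓ p q with
  | case1 ℓ => simp [hfe, modelVertex]
  | case2 ℓ p q ih =>
    have hcol : ℓ + 1 + p - q = ℓ + (p + 1 : ℕ) - q := by push_cast; ring
    have hexp : Finsupp.single (0 : Fin 2) 1 + (Finsupp.single 0 p + Finsupp.single 1 q) =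
        Finsupp.single 0 (p + 1) + Finsupp.single 1 q := by
      rw [← add_assoc, ← Finsupp.single_add, add_comm 1 p]
    rw [map_mul, ih, hfa, modelArrow, Matrix.single_mul_single_same, MvPolynomial.X,
      MvPolynomial.monomial_mul, one_mul, hexp, hcol]
  | case3 ℓ q ih =>
    have hcol : ℓ - 1 + (0 : ℕ) - q = ℓ + (0 : ℕ) - (q + 1 : ℕ) := by push_cast; ring
    have hexp : Finsupp.single (1 : Fin 2) 1 + (Finsupp.single 0 0 + Finsupp.single 1 q) =
        Finsupp.single 0 0 + Finsupp.single 1 (q + 1) := by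
      rw [add_left_comm, ← Finsupp.single_add, add_comm 1 q]
    rw [map_mul, ih, hfs, modelReverse, sub_add_cancel, Matrix.single_mul_single_same,
      MvPolynomial.X, MvPolynomial.monomial_mul, one_mul, hexp, hcol]

theorem linearIndependent_pathMonomial_of_algHom {e a s : ZMod n → A} (f : A →ₐ[k] Model k n)
    (hfe : ∀ i, f (e i) = modelVertex k n i) (hfa : ∀ i, f (a i) = modelArrow k n i)
    (hfs : ∀ i, f (s i) = modelReverse k n i) :
    LinearIndependent k fun i : ZMod n × ℕ × ℕ => pathMonomial e a s i.1 i.2.1 i.2.2 := by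
  refine LinearIndependent.of_comp f.toLinearMap ?_
  set index : ZMod n × ℕ × ℕ → ZMod n × ZMod n × (Fin 2 →₀ ℕ) :=
    fun i => (i.1, i.1 + i.2.1 - i.2.2, Finsupp.single 0 i.2.1 + Finsupp.single 1 i.2.2)
  have hindex : Function.Injective index := by
    rintro ⟨ℓ, p, q⟩ ⟨ℓ', p', q'⟩ h
    simp only [index, Prod.mk.injEq] at h
    obtain ⟨rfl, -, hpq⟩ := h
    have hp := DFunLike.congr_fun hpq 0
    have hq := DFunLike.congr_fun hpq 1
    simp only [Finsupp.add_apply, Finsupp.single_apply] at hp hq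
    simp_all
  have hcomp : f.toLinearMap ∘ (fun i : ZMod n × ℕ × ℕ => pathMonomial e a s i.1 i.2.1 i.2.2) =
      (MvPolynomial.basisMonomials (Fin 2) k).matrix (ZMod n) (ZMod n) ∘ index := by
    funext i
    simp [index, model_image_pathMonomial f hfe hfa hfs]
  rw [hcomp]
  exact (Module.Basis.linearIndependent _).comp index hindex

theorem _root_.IsPreprojectiveAlgebraAn.linearIndependent_pathMonomial
    {𝒜 : ℕ → Submodule k A} {e a s : ZMod n → A} (hA : IsPreprojectiveAlgebraAn k n A 𝒜 e a s) :
    LinearIndependent k fun i : ZMod n × ℕ × ℕ => pathMonomial e a s i.1 i.2.1 i.2.2 := by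
  obtain ⟨-, -, -, -, -, huniv⟩ := hA
  obtain ⟨f, hfe, hfa, hfs⟩ := huniv _ _ _ _ (preprojectiveRelations_model k n)
  exact linearIndependent_pathMonomial_of_algHom f hfe hfa hfs

end Model

section Dimension

open Finset

variable [NeZero n] (𝒜 : ℕ → Submodule k A) [GradedAlgebra 𝒜] {e a s : ZMod n → A}

section HomogeneousComponents

variable (hR : PreprojectiveRelations n e a s)
  (he : ∀ i, e i ∈ 𝒜 0) (ha : ∀ i, a i ∈ 𝒜 1) (hs : ∀ i, s i ∈ 𝒜 1)
  (hgen : Algebra.adjoin k (Set.range e ∪ Set.range a ∪ Set.range s) = ⊤)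
include hR he ha hs hgen

theorem homogeneousComponent_eq_span (j : ℕ) :
    𝒜 j = Submodule.span k ((fun i : ZMod n × ℕ × ℕ => pathMonomial e a s i.1 i.2.1 i.2.2) ''
      ↑(univ ×ˢ antidiagonal j : Finset (ZMod n × ℕ × ℕ))) := by
  rw [DirectSum.Decomposition.eq_span_image_of_span_eq_top 𝒜 (deg := fun i => i.2.1 + i.2.2)
    (fun i => pathMonomial_mem 𝒜 he ha hs i.1 i.2.1 i.2.2) (span_pathMonomial_eq_top hR hgen) j]
  congr
  ext
  simp

theorem map_mulLeft_vertex_eq_span (ℓ : ZMod n) (j : ℕ) :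
    (𝒜 j).map (LinearMap.mulLeft k (e ℓ)) =
      Submodule.span k ((fun i : ZMod n × ℕ × ℕ => pathMonomial e a s i.1 i.2.1 i.2.2) ''
        ↑({ℓ} ×ˢ antidiagonal j)) := by
  rw [homogeneousComponent_eq_span 𝒜 hR he ha hs hgen, Submodule.map_span, Set.image_image]
  refine le_antisymm (Submodule.span_le.2 ?_) (Submodule.span_mono ?_)
  · rintro _ ⟨⟨m, p, q⟩, hi, rfl⟩
    simp only [LinearMap.mulLeft_apply, vertex_mul_pathMonomial hR]
    split_ifs with h
    · subst h
      exact Submodule.subset_span ⟨(ℓ, p, q), by simpa using hi, rfl⟩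
    · exact Submodule.zero_mem _
  · rintro _ ⟨⟨m, p, q⟩, hi, rfl⟩
    simp only [Finset.coe_product, Finset.coe_singleton, Set.mem_prod, Set.mem_singleton_iff,
      Finset.mem_coe] at hi
    obtain ⟨rfl, hpq⟩ := hi
    exact ⟨(m, p, q), by simpa using hpq, vertex_mul_pathMonomial_self hR m p q⟩

end HomogeneousComponents

theorem _root_.IsPreprojectiveAlgebraAn.finrank_homogeneousComponent
    (hA : IsPreprojectiveAlgebraAn k n A 𝒜 e a s) (j : ℕ) :
    Module.finrank k (𝒜 j) = n * (j + 1) := by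
  have hli := hA.linearIndependent_pathMonomial
  obtain ⟨hR, he, ha, hs, hgen, -⟩ := hA
  rw [homogeneousComponent_eq_span 𝒜 hR he ha hs hgen, finrank_span_image_finset hli,
    Finset.card_product, Finset.card_univ, ZMod.card, Finset.Nat.card_antidiagonal]

theorem _root_.IsPreprojectiveAlgebraAn.finrank_map_mulLeft_vertex
    (hA : IsPreprojectiveAlgebraAn k n A 𝒜 e a s) (ℓ : ZMod n) (j : ℕ) :
    Module.finrank k ((𝒜 j).map (LinearMap.mulLeft k (e ℓ))) = j + 1 := by
  have hli := hA.linearIndependent_pathMonomial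
  obtain ⟨hR, he, ha, hs, hgen, -⟩ := hA
  rw [map_mulLeft_vertex_eq_span 𝒜 hR he ha hs hgen, finrank_span_image_finset hli,
    Finset.card_product, Finset.card_singleton, one_mul, Finset.Nat.card_antidiagonal]

end Dimension

end PreprojectiveAn

theorem preprojective_hilbert_series
    (hA : IsPreprojectiveAlgebraAn k n A 𝒜 e a astar) :
    (∀ (ℓ : ZMod n) (j : ℕ),
        Module.finrank k ((𝒜 j).map (LinearMap.mulLeft k (e ℓ))) = j + 1) ∧
    (∀ ℓ : ZMod n,
        (PowerSeries.mk fun j =>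
            (Module.finrank k ((𝒜 j).map (LinearMap.mulLeft k (e ℓ))) : k)) *
          (1 - PowerSeries.X) ^ 2 = 1) ∧
    ((PowerSeries.mk fun j => (Module.finrank k (𝒜 j) : k)) *
        (1 - PowerSeries.X) ^ 2 = (n : PowerSeries k)) := by
  have hvertex := hA.finrank_map_mulLeft_vertex
  refine ⟨hvertex, fun ℓ => ?_, ?_⟩
  · simp only [hvertex]
    exact PowerSeries.mk_succ_mul_one_sub_sq k
  · have hseries : (PowerSeries.mk fun j => (Module.finrank k (𝒜 j) : k)) =
        PowerSeries.C (n : k) * PowerSeries.mk fun j => ((j + 1 : ℕ) : k) := by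
      ext j
      rw [PowerSeries.coeff_C_mul, PowerSeries.coeff_mk, PowerSeries.coeff_mk,
        hA.finrank_homogeneousComponent, Nat.cast_mul]
    rw [hseries, mul_assoc, PowerSeries.mk_succ_mul_one_sub_sq, mul_one, map_natCast]

end
end

section
/- For A = Π_Q(k) with Q = Ã_{n−1}, the graded automorphism group Aut_gr(A) is isomorphic to the semidirect product D_{2n} ⋉ N, where N = {g ∈ Aut_gr(A) : g(e_i) = e_i for all i = 1,…,n} is a normal subgroup of Aut_gr(A) and D_{2n} is the dihedral group of order 2n acting as the symmetries of the underlying n-cycle permuting the vertices e_1,…,e_n; in particular every graded automorphism of A is the composition of a dihedral symmetry of the vertex set with an element of N, and N has finite index in Aut_gr(A). -/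
open CategoryTheory TensorProduct PowerSeries Matrix

noncomputable section

/-! ### The graded automorphism group -/

/-- The group of graded algebra automorphisms of `A` (those mapping each `𝒜 j` onto
itself). -/
def gradedAut (k : Type) [Field k] (A : Type) [Ring A] [Algebra k A]
    (𝒜 : ℕ → Submodule k A) : Subgroup (A ≃ₐ[k] A) where
  carrier := {g | ∀ j, Submodule.map (g.toLinearMap) (𝒜 j) = 𝒜 j}
  one_mem' := by
    intro j
    have h : (1 : A ≃ₐ[k] A).toLinearMap = LinearMap.id := rfl
    rw [h, Submodule.map_id]
  mul_mem' := by
    intro g h hg hh j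
    have hc : (g * h).toLinearMap = g.toLinearMap.comp h.toLinearMap := rfl
    rw [hc, Submodule.map_comp, hh j, hg j]
  inv_mem' := by
    intro g hg j
    conv_lhs => rw [← hg j, ← Submodule.map_comp]
    have h : (g⁻¹).toLinearMap.comp g.toLinearMap = LinearMap.id := by
      ext x
      exact g.symm_apply_apply x
    rw [h, Submodule.map_id]

/-- The subgroup of graded automorphisms fixing each of the idempotents `e i`. -/
def vertexFixing (k : Type) [Field k] (A : Type) [Ring A] [Algebra k A]
    (𝒜 : ℕ → Submodule k A) {ι : Type} (e : ι → A) :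
    Subgroup ↥(gradedAut k A 𝒜) where
  carrier := {g | ∀ i, (g : A ≃ₐ[k] A) (e i) = e i}
  one_mem' := fun _ => rfl
  mul_mem' := by
    intro g h hg hh i
    have hc : ((g * h : ↥(gradedAut k A 𝒜)) : A ≃ₐ[k] A) (e i)
        = (g : A ≃ₐ[k] A) ((h : A ≃ₐ[k] A) (e i)) := rfl
    rw [hc, hh i, hg i]
  inv_mem' := by
    intro g hg i
    have h := hg i
    calc ((g⁻¹ : ↥(gradedAut k A 𝒜)) : A ≃ₐ[k] A) (e i)
        = ((g⁻¹ : ↥(gradedAut k A 𝒜)) : A ≃ₐ[k] A) ((g : A ≃ₐ[k] A) (e i)) := by rw [h]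
      _ = e i := (g : A ≃ₐ[k] A).symm_apply_apply (e i)

/-!
A graded automorphism `g` preserves `A₀ = span {eᵢ} ≅ k^n`, so it carries the complete family of
orthogonal idempotents `(eᵢ)` to another such family in `k^n`, which can only be a permutation
`eᵢ ↦ e_{σ i}` of it. Since `A₁` is spanned by the arrows and `e_p A₁ e_q = 0` unless `p` and `q`
are adjacent on the cycle, `σ` preserves adjacency, so for `n ≥ 3` it is a symmetry of the `n`-gon.
This gives a homomorphism `Aut_gr(A) → D_{2n}` with kernel `N`, split by the automorphisms that the
universal property attaches to the rotations and reflections of the quiver.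
-/

def dihedralPerm (n : ℕ) : DihedralGroup n →* Equiv.Perm (ZMod n) where
  toFun
    | .r i => Equiv.subRight i
    | .sr i => Equiv.subLeft i
  map_one' := Equiv.ext sub_zero
  map_mul' d d' := by
    rcases d with i | i <;> rcases d' with j | j <;> ext x <;>
      simp only [DihedralGroup.r_mul_r, DihedralGroup.r_mul_sr, DihedralGroup.sr_mul_r,
        DihedralGroup.sr_mul_sr, Equiv.Perm.mul_apply, Equiv.subRight_apply,
        Equiv.subLeft_apply] <;> ring

@[simp]
theorem dihedralPerm_r {n : ℕ} (i x : ZMod n) : dihedralPerm n (.r i) x = x - i := rfl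

@[simp]
theorem dihedralPerm_sr {n : ℕ} (i x : ZMod n) : dihedralPerm n (.sr i) x = i - x := rfl

theorem dihedralPerm_injective {n : ℕ} (hn : 2 < n) : Function.Injective (dihedralPerm n) := by
  have : Fact (2 < n) := ⟨hn⟩
  refine (injective_iff_map_eq_one _).2 fun d hd => ?_
  have h (x : ZMod n) : dihedralPerm n d x = x := by rw [hd]; rfl
  rcases d with i | i
  · have h0 := h 0
    rw [dihedralPerm_r, zero_sub, neg_eq_zero] at h0
    rw [h0]
    rfl
  · have h0 := h 0
    have h1 := h 1
    rw [dihedralPerm_sr] at h0 h1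
    exact absurd (by linear_combination h1 - h0) ZMod.neg_one_ne_one

theorem ZMod.induction_on_add_one {n : ℕ} [NeZero n] {P : ZMod n → Prop} (zero : P 0)
    (add_one : ∀ i, P i → P (i + 1)) (x : ZMod n) : P x := by
  obtain ⟨m, rfl⟩ := ZMod.natCast_zmod_surjective x
  induction m with
  | zero => simpa using zero
  | succ m ih => simpa using add_one _ ih

theorem exists_dihedralPerm_eq_of_adjacent {n : ℕ} [NeZero n] (hn : 2 < n)
    (ρ : Equiv.Perm (ZMod n)) (hρ : ∀ i, ρ (i + 1) = ρ i + 1 ∨ ρ i = ρ (i + 1) + 1) :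
    ∃ d, ρ = dihedralPerm n d := by
  have : Fact (2 < n) := ⟨hn⟩
  have unit (i : ZMod n) : ρ (i + 1) - ρ i = 1 ∨ ρ (i + 1) - ρ i = -1 := by
    rcases hρ i with h | h
    · exact .inl (by rw [h]; ring)
    · exact .inr (by rw [h]; ring)
  obtain ⟨ε, hε0, hε⟩ : ∃ ε, ρ 1 - ρ 0 = ε ∧ (ε = 1 ∨ ε = -1) := ⟨_, rfl, by simpa using unit 0⟩
  have step : ∀ i, ρ (i + 1) - ρ i = ε := by
    refine ZMod.induction_on_add_one (by simpa using hε0) fun i hi => ?_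
    -- two steps in opposite directions would lead back to `ρ i`
    have hback : ρ (i + 1 + 1) - ρ (i + 1) ≠ -ε := fun h => ZMod.neg_one_ne_one <| by
      have := ρ.injective (show ρ (i + 1 + 1) = ρ i by linear_combination h + hi)
      linear_combination -this
    rcases unit (i + 1) with h | h <;> rw [h] at hback ⊢ <;> rcases hε with rfl | rfl <;>
      simp at hback ⊢
  have affine : ∀ x, ρ x = ρ 0 + x * ε :=
    ZMod.induction_on_add_one (by simp) fun x hx => by linear_combination hx + step x
  rcases hε with hε | hε
  · exact ⟨.r (-ρ 0), Equiv.ext fun x => by rw [affine x, hε, dihedralPerm_r]; ring⟩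
  · exact ⟨.sr (ρ 0), Equiv.ext fun x => by rw [affine x, hε, dihedralPerm_sr]; ring⟩

section Idempotents

variable {R I : Type*} [Ring R] {e : I → R}

theorem OrthogonalIdempotents.mul_eq_ite_of_mul_eq_left [DecidableEq I]
    (he : OrthogonalIdempotents e) {x : R} {p : I} (hx : e p * x = x) (j : I) :
    e j * x = if j = p then x else 0 := by
  rw [← hx, ← mul_assoc, he.mul_eq]
  rcases eq_or_ne j p with rfl | h
  · simp
  · simp [h]

theorem OrthogonalIdempotents.mul_eq_ite_of_mul_eq_right [DecidableEq I]
    (he : OrthogonalIdempotents e) {x : R} {p : I} (hx : x * e p = x) (j : I) :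
    x * e j = if j = p then x else 0 := by
  rw [← hx, mul_assoc, he.mul_eq]
  rcases eq_or_ne j p with rfl | h
  · simp
  · simp [h, Ne.symm h]

theorem CompleteOrthogonalIdempotents.exists_eq_single [IsDomain R] [Fintype I] [DecidableEq I]
    (he : CompleteOrthogonalIdempotents e) : ∃ i, e = Pi.single i 1 := by
  obtain ⟨i, -, hi⟩ : ∃ i ∈ Finset.univ, e i ≠ 0 :=
    Finset.exists_ne_zero_of_sum_ne_zero (he.complete ▸ one_ne_zero)
  have hi1 : e i = 1 := (IsIdempotentElem.iff_eq_zero_or_one.1 (he.idem i)).resolve_left hi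
  refine ⟨i, funext fun j => ?_⟩
  rcases eq_or_ne j i with rfl | hj
  · simp [hi1]
  · simpa [hi1, hj] using he.ortho hj.symm

theorem CompleteOrthogonalIdempotents.exists_perm_eq_single [IsDomain R] [Fintype I]
    [DecidableEq I] {c : I → I → R} (hc : CompleteOrthogonalIdempotents c) (hc0 : ∀ i, c i ≠ 0) :
    ∃ σ : Equiv.Perm I, ∀ i, c i = Pi.single (σ i) 1 := by
  choose τ hτ using fun j => (hc.map (Pi.evalRingHom (fun _ => R) j)).exists_eq_single
  have hc_apply (i j : I) : c i j = if i = τ j then 1 else 0 := by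
    simpa [Pi.single_apply] using congrFun (hτ j) i
  have hsurj : Function.Surjective τ := fun i => by
    obtain ⟨j, hj⟩ := Function.ne_iff.1 (hc0 i)
    exact ⟨j, by_contra fun h => hj (by rw [hc_apply, if_neg (Ne.symm h)]; rfl)⟩
  let σ := Equiv.ofBijective τ ⟨Finite.injective_iff_surjective.2 hsurj, hsurj⟩
  refine ⟨σ.symm, fun i => funext fun j => ?_⟩
  rw [hc_apply, Pi.single_apply]
  exact if_congr (σ.eq_symm_apply.trans eq_comm).symm rfl rfl

variable {k A : Type*} [Field k] [Ring A] [Algebra k A]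

theorem OrthogonalIdempotents.sum_smul_mul_sum_smul [Fintype I] [DecidableEq I] {e : I → A}
    (he : OrthogonalIdempotents e) (c d : I → k) :
    (∑ i, c i • e i) * ∑ i, d i • e i = ∑ i, (c i * d i) • e i := by
  simp [Finset.sum_mul, Finset.mul_sum, he.mul_eq, smul_smul, mul_comm]

theorem CompleteOrthogonalIdempotents.exists_perm_of_mem_span [Fintype I] [DecidableEq I]
    {e f : I → A} (he : CompleteOrthogonalIdempotents e) (he0 : ∀ i, e i ≠ 0)
    (hf : CompleteOrthogonalIdempotents f) (hf0 : ∀ i, f i ≠ 0)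
    (hmem : ∀ i, f i ∈ Submodule.span k (Set.range e)) :
    ∃ σ : Equiv.Perm I, ∀ i, f i = e (σ i) := by
  -- `c ↦ ∑ cᵢ eᵢ` identifies `k^I` with `span k (range e)` as algebras
  let ψ : (I → k) →ₐ[k] A := AlgHom.ofLinearMap (Fintype.linearCombination k e)
    (by simp [Fintype.linearCombination_apply, he.complete])
    (by simp [Fintype.linearCombination_apply, he.sum_smul_mul_sum_smul])
  have hψ_single (i : I) : ψ (Pi.single i 1) = e i := by simp [ψ]
  have hψ : Function.Injective ψ := by
    refine (injective_iff_map_eq_zero ψ).2 fun c hc => funext fun j => ?_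
    have : c j • e j = 0 := by
      simpa [ψ, Fintype.linearCombination_apply, Finset.sum_mul, smul_mul_assoc, he.mul_eq] using
        congr($hc * e j)
    exact (smul_eq_zero.1 this).resolve_right (he0 j)
  have hrange (i : I) : ∃ c, ψ c = f i := by
    rw [← Fintype.range_linearCombination] at hmem
    exact hmem i
  choose c hc using hrange
  have hcoi : CompleteOrthogonalIdempotents c := by
    refine (CompleteOrthogonalIdempotents.map_injective_iff (ψ : (I → k) →+* A) hψ).1 ?_
    convert hf
    ext i
    exact hc i
  obtain ⟨σ, hσ⟩ := hcoi.exists_perm_eq_single fun i h => hf0 i (by rw [← hc, h, map_zero])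
  exact ⟨σ, fun i => by rw [← hc, hσ, hψ_single]⟩

end Idempotents

theorem DirectSum.Decomposition.eq_of_le_of_iSup_eq_top {ι R M : Type*} [DecidableEq ι]
    [Semiring R] [AddCommMonoid M] [Module R M] (ℳ : ι → Submodule R M)
    [DirectSum.Decomposition ℳ] {N : ι → Submodule R M} (hle : ∀ i, N i ≤ ℳ i)
    (htop : ⨆ i, N i = ⊤) (i : ι) : N i = ℳ i := by
  refine le_antisymm (hle i) fun x hx => ?_
  rw [← DirectSum.decompose_of_mem_same ℳ hx]
  refine Submodule.iSup_induction N (motive := fun y => (DirectSum.decompose ℳ y i : M) ∈ N i)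
    (htop ▸ Submodule.mem_top) (fun j y hy => ?_) (by simp) fun y z hy hz => ?_
  · rcases eq_or_ne j i with rfl | hji
    · rwa [DirectSum.decompose_of_mem_same ℳ (hle j hy)]
    · rw [DirectSum.decompose_of_mem_ne ℳ (hle j hy) hji]
      exact zero_mem _
  · rw [DirectSum.decompose_add, DirectSum.add_apply, Submodule.coe_add]
    exact add_mem hy hz

theorem Submodule.span_mul_span_le {R A : Type*} [CommSemiring R] [Semiring A] [Algebra R A]
    {S T : Set A} {P : Submodule R A} (h : ∀ x ∈ S, ∀ y ∈ T, x * y ∈ P) :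
    span R S * span R T ≤ P := by
  rw [span_mul_span, span_le]
  exact Set.mul_subset_iff.2 h

namespace PreprojectiveRelations

variable {n : ℕ} [NeZero n] {C : Type} [Ring C] {e a s : ZMod n → C}

theorem completeOrthogonalIdempotents (hr : PreprojectiveRelations n e a s) :
    CompleteOrthogonalIdempotents e :=
  ⟨OrthogonalIdempotents.iff_mul_eq.2 hr.1, hr.2.1⟩

theorem vertex_mul_arrow (hr : PreprojectiveRelations n e a s) (j i : ZMod n) :
    e j * a i = if j = i then a i else 0 :=
  hr.completeOrthogonalIdempotents.mul_eq_ite_of_mul_eq_left (hr.2.2.1 i) j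

theorem arrow_mul_vertex (hr : PreprojectiveRelations n e a s) (i j : ZMod n) :
    a i * e j = if j = i + 1 then a i else 0 :=
  hr.completeOrthogonalIdempotents.mul_eq_ite_of_mul_eq_right (hr.2.2.2.1 i) j

theorem vertex_mul_reverseArrow (hr : PreprojectiveRelations n e a s) (j i : ZMod n) :
    e j * s i = if j = i + 1 then s i else 0 :=
  hr.completeOrthogonalIdempotents.mul_eq_ite_of_mul_eq_left (hr.2.2.2.2.1 i) j

theorem reverseArrow_mul_vertex (hr : PreprojectiveRelations n e a s) (i j : ZMod n) :
    s i * e j = if j = i then s i else 0 :=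
  hr.completeOrthogonalIdempotents.mul_eq_ite_of_mul_eq_right (hr.2.2.2.2.2.1 i) j

theorem rotate (hr : PreprojectiveRelations n e a s) (c : ZMod n) :
    PreprojectiveRelations n (fun i => e (i - c)) (fun i => a (i - c)) (fun i => s (i - c)) := by
  obtain ⟨hee, hsum, hea, hae, hes, hse, hrel⟩ := hr
  refine ⟨fun i j => ?_, ((Equiv.subRight c).sum_comp e).trans hsum, fun i => hea _,
    fun i => ?_, fun i => ?_, fun i => hse _, fun i => ?_⟩
  · simp only [hee, sub_left_inj]
  · simpa only [add_sub_right_comm] using hae (i - c)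
  · simpa only [add_sub_right_comm] using hes (i - c)
  · simpa only [sub_right_comm] using hrel (i - c)

theorem reflect (hr : PreprojectiveRelations n e a s) (c : ZMod n) :
    PreprojectiveRelations n (fun i => e (c - i)) (fun i => s (c - i - 1))
      (fun i => a (c - i - 1)) := by
  obtain ⟨hee, hsum, hea, hae, hes, hse, hrel⟩ := hr
  refine ⟨fun i j => ?_, ((Equiv.subLeft c).sum_comp e).trans hsum, fun i => ?_,
    fun i => ?_, fun i => ?_, fun i => ?_, fun i => ?_⟩
  · simp only [hee, sub_right_inj]
  · simpa using hes (c - i - 1)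
  · simpa only [sub_add_eq_sub_sub] using hse (c - i - 1)
  · simpa only [sub_add_eq_sub_sub] using hea (c - i - 1)
  · simpa using hae (c - i - 1)
  · show _ = a (c - (i - 1) - 1) * s (c - (i - 1) - 1)
    rw [show c - (i - 1) - 1 = c - i by ring]
    exact (hrel _).symm

end PreprojectiveRelations

-- `d` maps the arrow `i → i + 1` to the arrow `d i → d (i + 1)`, which is a reversed arrow
-- when `d` is a reflection
def dihedralArrow {n : ℕ} {C : Type} (d : DihedralGroup n) (a s : ZMod n → C) : ZMod n → C :=
  match d with
  | .r c => fun i => a (i - c)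
  | .sr c => fun i => s (c - i - 1)

def dihedralReverseArrow {n : ℕ} {C : Type} (d : DihedralGroup n) (a s : ZMod n → C) :
    ZMod n → C :=
  match d with
  | .r c => fun i => s (i - c)
  | .sr c => fun i => a (c - i - 1)

theorem dihedralArrow_mem {n : ℕ} {C : Type} (d : DihedralGroup n) (a s : ZMod n → C)
    (i : ZMod n) : dihedralArrow d a s i ∈ Set.range a ∪ Set.range s := by
  cases d
  exacts [.inl ⟨_, rfl⟩, .inr ⟨_, rfl⟩]

theorem dihedralReverseArrow_mem {n : ℕ} {C : Type} (d : DihedralGroup n) (a s : ZMod n → C)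
    (i : ZMod n) : dihedralReverseArrow d a s i ∈ Set.range a ∪ Set.range s := by
  cases d
  exacts [.inr ⟨_, rfl⟩, .inl ⟨_, rfl⟩]

theorem PreprojectiveRelations.dihedral {n : ℕ} [NeZero n] {C : Type} [Ring C]
    {e a s : ZMod n → C} (hr : PreprojectiveRelations n e a s) (d : DihedralGroup n) :
    PreprojectiveRelations n (fun i => e (dihedralPerm n d i)) (dihedralArrow d a s)
      (dihedralReverseArrow d a s) := by
  cases d with
  | r c => exact hr.rotate c
  | sr c => exact hr.reflect c

theorem preprojectiveRelations_matrix_single (n : ℕ) [NeZero n] (R : Type) [Ring R] :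
    PreprojectiveRelations n (fun i => Matrix.single i i (1 : R))
      (fun i => Matrix.single i (i + 1) 1) (fun i => Matrix.single (i + 1) i 1) := by
  refine ⟨fun i j => ?_, ?_, fun i => ?_, fun i => ?_, fun i => ?_, fun i => ?_, fun i => ?_⟩
  · by_cases h : i = j
    · subst h; simp
    · rw [if_neg h]
      exact Matrix.single_mul_single_of_ne (h := h) ..
  · ext p q
    simp [Matrix.sum_apply, Matrix.single, Matrix.one_apply, ite_and]
  all_goals simp

section Paths

open Submodule

variable (k : Type) [Field k] {n : ℕ} {A : Type} [Ring A] [Algebra k A]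

def pathSpan (e a s : ZMod n → A) (m : ℕ) : Submodule k A :=
  span k (Set.range e) * span k (Set.range a ∪ Set.range s) ^ m

variable {k} {e a s : ZMod n → A}

theorem pathSpan_zero : pathSpan k e a s 0 = span k (Set.range e) := by
  rw [pathSpan, pow_zero, mul_one]

theorem pathSpan_succ (m : ℕ) :
    pathSpan k e a s (m + 1) = pathSpan k e a s m * span k (Set.range a ∪ Set.range s) := by
  rw [pathSpan, pathSpan, pow_succ, mul_assoc]

theorem map_pathSpan_le (F : A →ₐ[k] A)
    (he : (span k (Set.range e)).map F.toLinearMap ≤ span k (Set.range e))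
    (has : (span k (Set.range a ∪ Set.range s)).map F.toLinearMap ≤
      span k (Set.range a ∪ Set.range s)) (m : ℕ) :
    (pathSpan k e a s m).map F.toLinearMap ≤ pathSpan k e a s m := by
  rw [pathSpan, Submodule.map_mul, Submodule.map_pow]
  exact mul_le_mul' he (pow_le_pow_left' has m)

namespace PreprojectiveRelations

variable [NeZero n]

theorem span_vertices_mul_span_vertices_le (hr : PreprojectiveRelations n e a s) :
    span k (Set.range e) * span k (Set.range e) ≤ span k (Set.range e) :=
  span_mul_span_le <| by
    rintro _ ⟨i, rfl⟩ _ ⟨j, rfl⟩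
    rw [hr.1]
    exact ite_mem.2 ⟨fun _ => subset_span ⟨i, rfl⟩, fun _ => zero_mem _⟩

theorem span_arrows_mul_span_vertices_le (hr : PreprojectiveRelations n e a s) :
    span k (Set.range a ∪ Set.range s) * span k (Set.range e) ≤
      span k (Set.range a ∪ Set.range s) :=
  span_mul_span_le <| by
    rintro _ (⟨i, rfl⟩ | ⟨i, rfl⟩) _ ⟨j, rfl⟩
    · rw [hr.arrow_mul_vertex]
      exact ite_mem.2 ⟨fun _ => subset_span (.inl ⟨i, rfl⟩), fun _ => zero_mem _⟩
    · rw [hr.reverseArrow_mul_vertex]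
      exact ite_mem.2 ⟨fun _ => subset_span (.inr ⟨i, rfl⟩), fun _ => zero_mem _⟩

theorem span_vertices_mul_span_arrows_le (hr : PreprojectiveRelations n e a s) :
    span k (Set.range e) * span k (Set.range a ∪ Set.range s) ≤
      span k (Set.range a ∪ Set.range s) :=
  span_mul_span_le <| by
    rintro _ ⟨j, rfl⟩ _ (⟨i, rfl⟩ | ⟨i, rfl⟩)
    · rw [hr.vertex_mul_arrow]
      exact ite_mem.2 ⟨fun _ => subset_span (.inl ⟨i, rfl⟩), fun _ => zero_mem _⟩
    · rw [hr.vertex_mul_reverseArrow]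
      exact ite_mem.2 ⟨fun _ => subset_span (.inr ⟨i, rfl⟩), fun _ => zero_mem _⟩

theorem pathSpan_mul_le (hr : PreprojectiveRelations n e a s) (i j : ℕ) :
    pathSpan k e a s i * pathSpan k e a s j ≤ pathSpan k e a s (i + j) := by
  induction j with
  | zero =>
    rw [pathSpan_zero]
    cases i with
    | zero =>
      simpa only [pathSpan_zero, add_zero] using hr.span_vertices_mul_span_vertices_le (k := k)
    | succ i =>
      rw [pathSpan_succ, mul_assoc]
      exact mul_le_mul' le_rfl hr.span_arrows_mul_span_vertices_le
  | succ j ih =>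
    rw [← add_assoc, pathSpan_succ, pathSpan_succ, ← mul_assoc]
    exact mul_le_mul' ih le_rfl

theorem iSup_pathSpan_eq_top (hr : PreprojectiveRelations n e a s)
    (hgen : Algebra.adjoin k (Set.range e ∪ Set.range a ∪ Set.range s) = ⊤) :
    ⨆ m, pathSpan k e a s m = ⊤ := by
  set P := ⨆ m, pathSpan k e a s m
  have hmul : P * P ≤ P := by
    rw [iSup_mul]
    refine iSup_le fun i => ?_
    rw [mul_iSup]
    exact iSup_le fun j => (hr.pathSpan_mul_le i j).trans (le_iSup _ (i + j))
  have hvertex (i : ZMod n) : e i ∈ P :=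
    le_iSup (pathSpan k e a s) 0 (by rw [pathSpan_zero]; exact subset_span ⟨i, rfl⟩)
  have harrow {x : A} (i : ZMod n) (hx : e i * x = x) (hxs : x ∈ Set.range a ∪ Set.range s) :
      x ∈ P :=
    le_iSup (pathSpan k e a s) 1 (by
      rw [← hx, ← zero_add 1, pathSpan_succ, pathSpan_zero]
      exact mul_mem_mul (subset_span ⟨i, rfl⟩) (subset_span hxs))
  have h1 : (1 : A) ∈ P := hr.2.1 ▸ sum_mem fun i _ => hvertex i
  have hadjoin := Algebra.adjoin_le (s := Set.range e ∪ Set.range a ∪ Set.range s)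
    (S := P.toSubalgebra h1 fun x y hx hy => hmul (mul_mem_mul hx hy)) <| by
      rintro _ ((⟨i, rfl⟩ | ⟨i, rfl⟩) | ⟨i, rfl⟩)
      · exact hvertex i
      · exact harrow i (hr.2.2.1 i) (.inl ⟨i, rfl⟩)
      · exact harrow (i + 1) (hr.2.2.2.2.1 i) (.inr ⟨i, rfl⟩)
  rw [hgen] at hadjoin
  exact eq_top_iff.2 fun x _ => hadjoin Algebra.mem_top

theorem adjacent_of_mul_mul_ne_zero (hr : PreprojectiveRelations n e a s) {x : A}
    (hx : x ∈ span k (Set.range a ∪ Set.range s)) {p q : ZMod n}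
    (h : e p * x * e q ≠ 0) : q = p + 1 ∨ p = q + 1 := by
  by_contra hpq
  refine h ?_
  clear h
  induction hx using span_induction with
  | mem y hy =>
    rcases hy with ⟨i, rfl⟩ | ⟨i, rfl⟩
    · rw [hr.vertex_mul_arrow]
      split_ifs with hp
      · rw [hr.arrow_mul_vertex, if_neg fun hq => hpq (.inl (by rw [hp, hq]))]
      · rw [zero_mul]
    · rw [hr.vertex_mul_reverseArrow]
      split_ifs with hp
      · rw [hr.reverseArrow_mul_vertex, if_neg fun hq => hpq (.inr (by rw [hp, hq]))]
      · rw [zero_mul]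
  | zero => rw [mul_zero, zero_mul]
  | add y z _ _ hy hz => rw [mul_add, add_mul, hy, hz, add_zero]
  | smul c y _ hy => rw [mul_smul_comm, smul_mul_assoc, hy, smul_zero]

end PreprojectiveRelations

end Paths

namespace IsPreprojectiveAlgebraAn

open Submodule

variable {k : Type} [Field k] {n : ℕ} [NeZero n] {A : Type} [Ring A] [Algebra k A]
  {𝒜 : ℕ → Submodule k A} {e a s : ZMod n → A}

theorem relations (hA : IsPreprojectiveAlgebraAn k n A 𝒜 e a s) :
    PreprojectiveRelations n e a s :=
  hA.1

theorem vertex_mem (hA : IsPreprojectiveAlgebraAn k n A 𝒜 e a s) (i : ZMod n) : e i ∈ 𝒜 0 :=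
  hA.2.1 i

theorem arrow_mem (hA : IsPreprojectiveAlgebraAn k n A 𝒜 e a s) (i : ZMod n) : a i ∈ 𝒜 1 :=
  hA.2.2.1 i

theorem reverseArrow_mem (hA : IsPreprojectiveAlgebraAn k n A 𝒜 e a s) (i : ZMod n) :
    s i ∈ 𝒜 1 :=
  hA.2.2.2.1 i

theorem adjoin_eq_top (hA : IsPreprojectiveAlgebraAn k n A 𝒜 e a s) :
    Algebra.adjoin k (Set.range e ∪ Set.range a ∪ Set.range s) = ⊤ :=
  hA.2.2.2.2.1

theorem exists_lift (hA : IsPreprojectiveAlgebraAn k n A 𝒜 e a s) {C : Type} [Ring C]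
    [Algebra k C] {e' a' s' : ZMod n → C} (hr : PreprojectiveRelations n e' a' s') :
    ∃ f : A →ₐ[k] C, (∀ i, f (e i) = e' i) ∧ (∀ i, f (a i) = a' i) ∧ (∀ i, f (s i) = s' i) :=
  hA.2.2.2.2.2 C e' a' s' hr

theorem algHom_ext (hA : IsPreprojectiveAlgebraAn k n A 𝒜 e a s) {C : Type} [Ring C]
    [Algebra k C] {f g : A →ₐ[k] C} (he : ∀ i, f (e i) = g (e i)) (ha : ∀ i, f (a i) = g (a i))
    (hs : ∀ i, f (s i) = g (s i)) : f = g :=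
  AlgHom.ext_of_adjoin_eq_top hA.adjoin_eq_top <| by
    rintro _ ((⟨i, rfl⟩ | ⟨i, rfl⟩) | ⟨i, rfl⟩)
    exacts [he i, ha i, hs i]

theorem vertex_ne_zero (hA : IsPreprojectiveAlgebraAn k n A 𝒜 e a s) (i : ZMod n) : e i ≠ 0 := by
  obtain ⟨f, hfe, -, -⟩ := hA.exists_lift (preprojectiveRelations_matrix_single n k)
  intro h
  simpa [h] using congr($(hfe i) i i)

theorem arrow_ne_zero (hA : IsPreprojectiveAlgebraAn k n A 𝒜 e a s) (i : ZMod n) : a i ≠ 0 := by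
  obtain ⟨f, -, hfa, -⟩ := hA.exists_lift (preprojectiveRelations_matrix_single n k)
  intro h
  simpa [h] using congr($(hfa i) i (i + 1))

theorem vertex_injective (hA : IsPreprojectiveAlgebraAn k n A 𝒜 e a s) :
    Function.Injective e := fun i j hij => by_contra fun h => hA.vertex_ne_zero i <| by
  have hcoi := hA.relations.completeOrthogonalIdempotents
  simpa [← hij, (hcoi.idem i).eq] using hcoi.ortho h

theorem dihedral_eq_of_apply_vertex (hn : 2 < n) (hA : IsPreprojectiveAlgebraAn k n A 𝒜 e a s)
    {g : A ≃ₐ[k] A} {d d' : DihedralGroup n} (hd : ∀ i, g (e i) = e (dihedralPerm n d i))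
    (hd' : ∀ i, g (e i) = e (dihedralPerm n d' i)) : d = d' :=
  dihedralPerm_injective hn <| Equiv.ext fun i => hA.vertex_injective ((hd i).symm.trans (hd' i))

noncomputable def dihedralAlgHom (hA : IsPreprojectiveAlgebraAn k n A 𝒜 e a s)
    (d : DihedralGroup n) : A →ₐ[k] A :=
  (hA.exists_lift (hA.relations.dihedral d)).choose

theorem dihedralAlgHom_vertex (hA : IsPreprojectiveAlgebraAn k n A 𝒜 e a s)
    (d : DihedralGroup n) (i : ZMod n) : hA.dihedralAlgHom d (e i) = e (dihedralPerm n d i) :=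
  (hA.exists_lift (hA.relations.dihedral d)).choose_spec.1 i

theorem dihedralAlgHom_arrow (hA : IsPreprojectiveAlgebraAn k n A 𝒜 e a s)
    (d : DihedralGroup n) (i : ZMod n) : hA.dihedralAlgHom d (a i) = dihedralArrow d a s i :=
  (hA.exists_lift (hA.relations.dihedral d)).choose_spec.2.1 i

theorem dihedralAlgHom_reverseArrow (hA : IsPreprojectiveAlgebraAn k n A 𝒜 e a s)
    (d : DihedralGroup n) (i : ZMod n) :
    hA.dihedralAlgHom d (s i) = dihedralReverseArrow d a s i :=
  (hA.exists_lift (hA.relations.dihedral d)).choose_spec.2.2 i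

theorem dihedralAlgHom_one (hA : IsPreprojectiveAlgebraAn k n A 𝒜 e a s) :
    hA.dihedralAlgHom 1 = 1 := by
  refine hA.algHom_ext (fun i => ?_) (fun i => ?_) (fun i => ?_)
  · simp [dihedralAlgHom_vertex]
  · rw [dihedralAlgHom_arrow, ← DihedralGroup.r_zero]
    exact congrArg a (sub_zero i)
  · rw [dihedralAlgHom_reverseArrow, ← DihedralGroup.r_zero]
    exact congrArg s (sub_zero i)

theorem dihedralAlgHom_mul (hA : IsPreprojectiveAlgebraAn k n A 𝒜 e a s)
    (d d' : DihedralGroup n) :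
    hA.dihedralAlgHom (d * d') = hA.dihedralAlgHom d * hA.dihedralAlgHom d' := by
  refine hA.algHom_ext (fun i => ?_) (fun i => ?_) (fun i => ?_)
  · simp [dihedralAlgHom_vertex]
  all_goals
    rcases d with c | c <;> rcases d' with c' | c' <;>
      simp only [AlgHom.mul_apply, dihedralAlgHom_arrow, dihedralAlgHom_reverseArrow,
        dihedralArrow, dihedralReverseArrow, DihedralGroup.r_mul_r, DihedralGroup.r_mul_sr,
        DihedralGroup.sr_mul_r, DihedralGroup.sr_mul_sr] <;>
      congr 1 <;> ring

noncomputable def dihedralAut (hA : IsPreprojectiveAlgebraAn k n A 𝒜 e a s) :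
    DihedralGroup n →* A ≃ₐ[k] A :=
  (AlgEquiv.algHomUnitsEquiv k A).toMonoidHom.comp <| MonoidHom.toHomUnits
    { toFun := hA.dihedralAlgHom, map_one' := hA.dihedralAlgHom_one,
      map_mul' := hA.dihedralAlgHom_mul }

variable [GradedAlgebra 𝒜]

theorem pathSpan_le_grade (hA : IsPreprojectiveAlgebraAn k n A 𝒜 e a s) (m : ℕ) :
    pathSpan k e a s m ≤ 𝒜 m := by
  induction m with
  | zero =>
    rw [pathSpan_zero, span_le]
    exact Set.range_subset_iff.2 hA.vertex_mem
  | succ m ih =>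
    have hV : span k (Set.range a ∪ Set.range s) ≤ 𝒜 1 :=
      span_le.2 (Set.union_subset (Set.range_subset_iff.2 hA.arrow_mem)
        (Set.range_subset_iff.2 hA.reverseArrow_mem))
    rw [pathSpan_succ]
    exact mul_le.2 fun x hx y hy => SetLike.mul_mem_graded (ih hx) (hV hy)

theorem grade_eq_pathSpan (hA : IsPreprojectiveAlgebraAn k n A 𝒜 e a s) (m : ℕ) :
    𝒜 m = pathSpan k e a s m :=
  (DirectSum.Decomposition.eq_of_le_of_iSup_eq_top 𝒜 hA.pathSpan_le_grade
    (hA.relations.iSup_pathSpan_eq_top hA.adjoin_eq_top) m).symm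

theorem grade_zero (hA : IsPreprojectiveAlgebraAn k n A 𝒜 e a s) :
    𝒜 0 = span k (Set.range e) := by
  rw [hA.grade_eq_pathSpan, pathSpan_zero]

theorem grade_one_le (hA : IsPreprojectiveAlgebraAn k n A 𝒜 e a s) :
    𝒜 1 ≤ span k (Set.range a ∪ Set.range s) := by
  rw [hA.grade_eq_pathSpan, ← zero_add 1, pathSpan_succ, pathSpan_zero]
  exact hA.relations.span_vertices_mul_span_arrows_le

theorem map_grade_dihedralAut_le (hA : IsPreprojectiveAlgebraAn k n A 𝒜 e a s)
    (d : DihedralGroup n) (j : ℕ) : (𝒜 j).map (hA.dihedralAut d).toLinearMap ≤ 𝒜 j := by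
  rw [hA.grade_eq_pathSpan]
  refine map_pathSpan_le (hA.dihedralAlgHom d) ?_ ?_ j <;> rw [map_span, span_le]
  · rintro _ ⟨_, ⟨i, rfl⟩, rfl⟩
    exact subset_span ⟨dihedralPerm n d i, (hA.dihedralAlgHom_vertex d i).symm⟩
  · rintro _ ⟨_, ⟨i, rfl⟩ | ⟨i, rfl⟩, rfl⟩ <;> apply subset_span
    · rw [AlgHom.toLinearMap_apply, dihedralAlgHom_arrow]
      exact dihedralArrow_mem d a s i
    · rw [AlgHom.toLinearMap_apply, dihedralAlgHom_reverseArrow]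
      exact dihedralReverseArrow_mem d a s i

theorem dihedralAut_mem_gradedAut (hA : IsPreprojectiveAlgebraAn k n A 𝒜 e a s)
    (d : DihedralGroup n) : hA.dihedralAut d ∈ gradedAut k A 𝒜 := fun j =>
  (hA.map_grade_dihedralAut_le d j).antisymm fun x hx =>
    ⟨hA.dihedralAut d⁻¹ x, hA.map_grade_dihedralAut_le d⁻¹ j (mem_map_of_mem hx), by
      rw [LinearEquiv.coe_coe, AlgEquiv.toLinearEquiv_apply, ← AlgEquiv.mul_apply, ← map_mul,
        mul_inv_cancel, map_one, AlgEquiv.one_apply]⟩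

noncomputable def dihedralSection (hA : IsPreprojectiveAlgebraAn k n A 𝒜 e a s) :
    DihedralGroup n →* gradedAut k A 𝒜 :=
  hA.dihedralAut.codRestrict _ hA.dihedralAut_mem_gradedAut

theorem exists_perm_apply_vertex (hA : IsPreprojectiveAlgebraAn k n A 𝒜 e a s)
    {g : A ≃ₐ[k] A} (hg : g ∈ gradedAut k A 𝒜) :
    ∃ σ : Equiv.Perm (ZMod n), ∀ i, g (e i) = e (σ i) :=
  hA.relations.completeOrthogonalIdempotents.exists_perm_of_mem_span hA.vertex_ne_zero
    (hA.relations.completeOrthogonalIdempotents.map (g : A →+* A))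
    (fun i => EmbeddingLike.map_ne_zero_iff.2 (hA.vertex_ne_zero i)) fun i => by
      rw [← hA.grade_zero, ← hg 0]
      exact mem_map_of_mem (hA.vertex_mem i)

theorem adjacent_of_apply_vertex (hA : IsPreprojectiveAlgebraAn k n A 𝒜 e a s)
    {g : A ≃ₐ[k] A} (hg : g ∈ gradedAut k A 𝒜) {σ : Equiv.Perm (ZMod n)}
    (hσ : ∀ i, g (e i) = e (σ i)) (i : ZMod n) :
    σ (i + 1) = σ i + 1 ∨ σ i = σ (i + 1) + 1 := by
  refine hA.relations.adjacent_of_mul_mul_ne_zero (x := g (a i)) (hA.grade_one_le ?_) ?_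
  · rw [← hg 1]
    exact mem_map_of_mem (hA.arrow_mem i)
  · rw [← hσ, ← hσ, ← map_mul, ← map_mul, hA.relations.2.2.1, hA.relations.2.2.2.1]
    exact EmbeddingLike.map_ne_zero_iff.2 (hA.arrow_ne_zero i)

theorem exists_dihedral_apply_vertex (hn : 2 < n) (hA : IsPreprojectiveAlgebraAn k n A 𝒜 e a s)
    {g : A ≃ₐ[k] A} (hg : g ∈ gradedAut k A 𝒜) :
    ∃ d, ∀ i, g (e i) = e (dihedralPerm n d i) := by
  obtain ⟨σ, hσ⟩ := hA.exists_perm_apply_vertex hg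
  obtain ⟨d, rfl⟩ := exists_dihedralPerm_eq_of_adjacent hn σ (hA.adjacent_of_apply_vertex hg hσ)
  exact ⟨d, hσ⟩

noncomputable def vertexSymmetry (hn : 2 < n) (hA : IsPreprojectiveAlgebraAn k n A 𝒜 e a s) :
    gradedAut k A 𝒜 →* DihedralGroup n :=
  have spec (g : gradedAut k A 𝒜) := (hA.exists_dihedral_apply_vertex hn g.2).choose_spec
  MonoidHom.mk' (fun g => (hA.exists_dihedral_apply_vertex hn g.2).choose) fun g h =>
    hA.dihedral_eq_of_apply_vertex hn (spec (g * h)) fun i => by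
      rw [map_mul, Equiv.Perm.mul_apply, ← spec, ← spec]
      rfl

theorem vertexSymmetry_spec (hn : 2 < n) (hA : IsPreprojectiveAlgebraAn k n A 𝒜 e a s)
    (g : gradedAut k A 𝒜) (i : ZMod n) :
    (g : A ≃ₐ[k] A) (e i) = e (dihedralPerm n (hA.vertexSymmetry hn g) i) :=
  (hA.exists_dihedral_apply_vertex hn g.2).choose_spec i

theorem vertexSymmetry_eq (hn : 2 < n) (hA : IsPreprojectiveAlgebraAn k n A 𝒜 e a s)
    {g : gradedAut k A 𝒜} {d : DihedralGroup n}
    (h : ∀ i, (g : A ≃ₐ[k] A) (e i) = e (dihedralPerm n d i)) : hA.vertexSymmetry hn g = d :=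
  hA.dihedral_eq_of_apply_vertex hn (hA.vertexSymmetry_spec hn g) h

theorem ker_vertexSymmetry (hn : 2 < n) (hA : IsPreprojectiveAlgebraAn k n A 𝒜 e a s) :
    (hA.vertexSymmetry hn).ker = vertexFixing k A 𝒜 e := by
  ext g
  refine MonoidHom.mem_ker.trans ⟨fun h i => ?_, fun h => hA.vertexSymmetry_eq hn fun i => ?_⟩
  · simpa [h] using hA.vertexSymmetry_spec hn g i
  · simpa using h i

theorem vertexSymmetry_dihedralSection (hn : 2 < n)
    (hA : IsPreprojectiveAlgebraAn k n A 𝒜 e a s) :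
    Function.RightInverse hA.dihedralSection (hA.vertexSymmetry hn) := fun d =>
  hA.vertexSymmetry_eq hn (hA.dihedralAlgHom_vertex d)

end IsPreprojectiveAlgebraAn

theorem MonoidHom.exists_mulEquiv_semidirectProduct_of_rightInverse {E G : Type*} [Group E]
    [Group G] {N : Subgroup E} (π : E →* G) (hker : π.ker = N) (σ : G →* E)
    (hσ : Function.RightInverse σ π) : ∃ φ : G →* MulAut N, Nonempty (E ≃* N ⋊[φ] G) := by
  subst hker
  let S : GroupExtension π.ker E G :=
    { inl := π.ker.subtype, rightHom := π, inl_injective := Subtype.coe_injective,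
      range_inl_eq_ker_rightHom := π.ker.range_subtype, rightHom_surjective := hσ.surjective }
  let split : S.Splitting := ⟨σ, hσ⟩
  exact ⟨split.conjAct, ⟨split.semidirectProductMulEquiv.symm⟩⟩

variable (k : Type) [Field k] [IsAlgClosed k] [CharZero k]
variable (n : ℕ) [NeZero n]
variable (A : Type) [Ring A] [Algebra k A] (𝒜 : ℕ → Submodule k A) [GradedAlgebra 𝒜]
variable (e a astar : ZMod n → A)

/-- For `A = Π_Q(k)` with `Q = Ã_{n-1}`, the subgroup
`N = {g ∈ Aut_gr(A) : g(eᵢ) = eᵢ}` is normal and of finite index in `Aut_gr(A)`;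
the dihedral group `D_{2n}` acts as the symmetries of the underlying `n`-cycle
permuting the vertices, every graded automorphism permutes the vertex idempotents by
such a dihedral symmetry, and `Aut_gr(A) ≅ D_{2n} ⋉ N`. -/
theorem preprojective_graded_aut_semidirect
    (hn : 3 ≤ n)
    (hA : IsPreprojectiveAlgebraAn k n A 𝒜 e a astar) :
    (vertexFixing k A 𝒜 e).Normal ∧
    (vertexFixing k A 𝒜 e).index ≠ 0 ∧
    ∃ ι : DihedralGroup n →* Equiv.Perm (ZMod n),
      (∀ i x, ι (DihedralGroup.r i) x = x - i) ∧
      (∀ i x, ι (DihedralGroup.sr i) x = i - x) ∧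
      (∀ g : ↥(gradedAut k A 𝒜), ∃ d : DihedralGroup n,
        ∀ i, ((g : A ≃ₐ[k] A)) (e i) = e (ι d i)) ∧
      (∃ φ : DihedralGroup n →* MulAut ↥(vertexFixing k A 𝒜 e),
        Nonempty (↥(gradedAut k A 𝒜) ≃*
          (vertexFixing k A 𝒜 e) ⋊[φ] DihedralGroup n)) := by
  have hker := hA.ker_vertexSymmetry hn
  refine ⟨hker ▸ (hA.vertexSymmetry hn).normal_ker, ?_, dihedralPerm n, fun _ _ => rfl,
    fun _ _ => rfl, fun g => ⟨_, hA.vertexSymmetry_spec hn g⟩,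
    (hA.vertexSymmetry hn).exists_mulEquiv_semidirectProduct_of_rightInverse hker
      hA.dihedralSection (hA.vertexSymmetry_dihedralSection hn)⟩
  rw [← hker]
  exact (Subgroup.finiteIndex_ker _).index_ne_zero

end
end
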